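/- Let C, C' ⊆ F₂ⁿ be linear codes, let e, e' ∈ F₂ⁿ, and let p be a real number with 0 < p < 1. Then Σ_{y ∈ C^⊥} Σ_{y' ∈ C'^⊥} (1−p)^{n − wt((e+y) ∨ (e'+y'))} (p/3)^{wt((e+y) ∨ (e'+y'))} = (1/(|C|·|C'|)) · Σ_{z ∈ C} Σ_{z' ∈ C'} (−1)^{⟨e,z⟩ + ⟨e',z'⟩} (1 − 4p/3)^{wt(z ∨ z')}. -/

import Mathlib

/-- Hamming weight of an `F₂`-vector. -/
def wt {n : ℕ} (x : Fin n → ZMod 2) : ℕ :=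
  (Finset.univ.filter fun i => x i ≠ 0).card

/-- The `F₂` inner product `⟨x, z⟩ = Σᵢ xᵢ zᵢ`. -/
def dot {n : ℕ} (x z : Fin n → ZMod 2) : ZMod 2 := ∑ i, x i * z i

/-- Coordinatewise OR of two `F₂`-vectors (coordinatewise maximum, viewing
coordinates in `{0,1}`). -/
def orv {n : ℕ} (x x' : Fin n → ZMod 2) : Fin n → ZMod 2 :=
  fun i => if x i = 0 ∧ x' i = 0 then 0 else 1

/-!
The summand on the left is the product weight `f x x' = ∏ᵢ w (xᵢ, x'ᵢ)` evaluated on the coset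
`(e, e') + C^⊥ × C'^⊥`. Poisson summation over `F₂ⁿ` (orthogonality of the characters
`z ↦ (-1)^⟨y,z⟩` on `C`) turns this coset sum into `1/(|C||C'|)` times the sum over `C × C'` of
the signed Fourier transform of `f`. Since `f` is a product over coordinates, so is its Fourier
transform, and the one-coordinate transform of `w` is `1` at `(0,0)` and `1 - 4p/3` elsewhere.
-/

open Finset

lemma ZMod.eq_zero_or_eq_one : ∀ a : ZMod 2, a = 0 ∨ a = 1 := by decide

lemma ZMod.sum_two {M : Type*} [AddCommMonoid M] (f : ZMod 2 → M) : ∑ a, f a = f 0 + f 1 :=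
  Fin.sum_univ_two f

noncomputable def signChar : AddChar (ZMod 2) ℝ where
  toFun a := if a = 0 then 1 else -1
  map_zero_eq_one' := if_pos rfl
  map_add_eq_mul' a b := by
    rcases ZMod.eq_zero_or_eq_one a with rfl | rfl <;>
      rcases ZMod.eq_zero_or_eq_one b with rfl | rfl <;> simp [CharTwo.add_self_eq_zero]

lemma signChar_apply (a : ZMod 2) : signChar a = if a = 0 then 1 else -1 := rfl

lemma signChar_eq_one_iff {a : ZMod 2} : signChar a = 1 ↔ a = 0 := by
  rcases ZMod.eq_zero_or_eq_one a with rfl | rfl <;> norm_num [signChar_apply]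

lemma AddChar.map_sum_eq_prod {ι A M : Type*} [AddCommMonoid A] [CommMonoid M]
    (ψ : AddChar A M) (s : Finset ι) (f : ι → A) :
    ψ (∑ i ∈ s, f i) = ∏ i ∈ s, ψ (f i) := by
  induction s using Finset.cons_induction with
  | empty => simp
  | cons a s ha ih => rw [sum_cons, AddChar.map_add_eq_mul, ih, prod_cons]

lemma Fintype.sum_pi_sum_pi_prod {ι α β R : Type*} [Fintype ι] [DecidableEq ι] [Fintype α]
    [Fintype β] [CommSemiring R] (g : ι → α → β → R) :
    ∑ x : ι → α, ∑ x' : ι → β, ∏ i, g i (x i) (x' i) = ∏ i, ∑ a, ∑ b, g i a b := by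
  rw [Fintype.prod_sum]
  exact Finset.sum_congr rfl fun x _ => (Fintype.prod_sum _).symm

variable {n : ℕ}

lemma dot_add_left (x y z : Fin n → ZMod 2) : dot (x + y) z = dot x z + dot y z :=
  add_dotProduct x y z

lemma dot_add_right (x y z : Fin n → ZMod 2) : dot x (y + z) = dot x y + dot x z :=
  dotProduct_add x y z

open scoped Classical in
lemma sum_code_signChar_dot (C : Submodule (ZMod 2) (Fin n → ZMod 2)) (y : Fin n → ZMod 2) :
    ∑ z ∈ univ.filter (· ∈ C), signChar (dot y z) =
      if ∀ z ∈ C, dot y z = 0 then (Nat.card C : ℝ) else 0 := by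
  let φ : AddChar C ℝ := signChar.compAddMonoidHom
    ((AddMonoidHom.mk' (dot y) (dot_add_right y)).comp C.subtype.toAddMonoidHom)
  have hφ : φ = 0 ↔ ∀ z ∈ C, dot y z = 0 := by
    simp [φ, AddChar.eq_zero_iff, signChar_eq_one_iff]
  rw [sum_subtype _ (fun z => mem_filter_univ (p := (· ∈ C)) z), Nat.card_eq_fintype_card,
    ← if_congr hφ rfl rfl]
  exact AddChar.sum_eq_ite φ

open scoped Classical in
theorem poisson_summation_dual (C : Submodule (ZMod 2) (Fin n → ZMod 2))
    (e : Fin n → ZMod 2) (F : (Fin n → ZMod 2) → ℝ) :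
    Nat.card C * ∑ y ∈ univ.filter (fun y => ∀ z ∈ C, dot y z = 0), F (e + y) =
      ∑ z ∈ univ.filter (· ∈ C), signChar (dot e z) * ∑ x, F x * signChar (dot x z) := by
  calc Nat.card C * ∑ y ∈ univ.filter (fun y => ∀ z ∈ C, dot y z = 0), F (e + y)
      = ∑ y, F (e + y) * if ∀ z ∈ C, dot y z = 0 then (Nat.card C : ℝ) else 0 := by
        rw [sum_filter, mul_sum]
        exact sum_congr rfl fun y _ => by split_ifs <;> ring
    _ = ∑ x, F x * if ∀ z ∈ C, dot (e + x) z = 0 then (Nat.card C : ℝ) else 0 :=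
        Fintype.sum_equiv (Equiv.addLeft e) _ _ fun y => by
          simp [← add_assoc, ZModModule.add_self]
    _ = ∑ x, F x * ∑ z ∈ univ.filter (· ∈ C), signChar (dot e z) * signChar (dot x z) := by
        simp only [← AddChar.map_add_eq_mul, ← dot_add_left, sum_code_signChar_dot]
    _ = _ := by
        simp only [mul_sum]
        rw [sum_comm]
        exact sum_congr rfl fun _ _ => sum_congr rfl fun _ _ => mul_left_comm _ _ _

open scoped Classical in
theorem poisson_summation_dual_prod (C C' : Submodule (ZMod 2) (Fin n → ZMod 2))
    (e e' : Fin n → ZMod 2) (F : (Fin n → ZMod 2) → (Fin n → ZMod 2) → ℝ) :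
    Nat.card C * Nat.card C' *
        ∑ y ∈ univ.filter (fun y => ∀ z ∈ C, dot y z = 0),
          ∑ y' ∈ univ.filter (fun y' => ∀ z' ∈ C', dot y' z' = 0), F (e + y) (e' + y') =
      ∑ z ∈ univ.filter (· ∈ C), ∑ z' ∈ univ.filter (· ∈ C'),
        signChar (dot e z + dot e' z') * ∑ x, ∑ x', F x x' * signChar (dot x z + dot x' z') := by
  calc _ = Nat.card C * ∑ y ∈ univ.filter (fun y => ∀ z ∈ C, dot y z = 0),
        ∑ z' ∈ univ.filter (· ∈ C'),
          signChar (dot e' z') * ∑ x', F (e + y) x' * signChar (dot x' z') := by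
        rw [mul_assoc, mul_sum]
        exact congrArg _ (sum_congr rfl fun y _ => poisson_summation_dual C' e' (F (e + y)))
    _ = ∑ z' ∈ univ.filter (· ∈ C'), signChar (dot e' z') *
          (Nat.card C * ∑ y ∈ univ.filter (fun y => ∀ z ∈ C, dot y z = 0),
            ∑ x', F (e + y) x' * signChar (dot x' z')) := by
        simp only [mul_sum]
        rw [sum_comm]
        simp only [mul_left_comm]
    _ = ∑ z' ∈ univ.filter (· ∈ C'), signChar (dot e' z') *
          ∑ z ∈ univ.filter (· ∈ C), signChar (dot e z) *
            ∑ x, (∑ x', F x x' * signChar (dot x' z')) * signChar (dot x z) :=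
        sum_congr rfl fun z' _ => congrArg _
          (poisson_summation_dual C e fun x => ∑ x', F x x' * signChar (dot x' z'))
    _ = _ := by
        rw [sum_comm]
        simp only [mul_sum, AddChar.map_add_eq_mul, mul_comm, mul_left_comm]

lemma orv_eq_zero_iff {x x' : Fin n → ZMod 2} {i : Fin n} :
    orv x x' i = 0 ↔ x i = 0 ∧ x' i = 0 := by
  unfold orv
  split_ifs with h <;> simp [h]

lemma pow_sub_wt_orv_mul_pow_wt_orv {M : Type*} [CommMonoid M] (a b : M)
    (x x' : Fin n → ZMod 2) :
    a ^ (n - wt (orv x x')) * b ^ wt (orv x x') = ∏ i, if x i = 0 ∧ x' i = 0 then a else b := by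
  have hwt : wt (orv x x') = #{i | ¬(x i = 0 ∧ x' i = 0)} := by
    simp only [wt, ne_eq, orv_eq_zero_iff]
  have hcard := card_filter_add_card_filter_not (s := univ) (fun i => x i = 0 ∧ x' i = 0)
  rw [card_univ, Fintype.card_fin] at hcard
  rw [prod_ite, prod_const, prod_const, hwt]
  congr 2
  omega

lemma sum_sum_ite_mul_signChar (p : ℝ) (u v : ZMod 2) :
    ∑ a, ∑ b, (if a = 0 ∧ b = 0 then 1 - p else p / 3) * signChar (a * u + b * v) =
      if u = 0 ∧ v = 0 then 1 else 1 - 4 * p / 3 := by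
  rcases ZMod.eq_zero_or_eq_one u with rfl | rfl <;>
    rcases ZMod.eq_zero_or_eq_one v with rfl | rfl <;>
    simp [ZMod.sum_two, signChar_apply, CharTwo.add_self_eq_zero] <;> ring

theorem sum_sum_depolarizing_mul_signChar (p : ℝ) (z z' : Fin n → ZMod 2) :
    ∑ x, ∑ x', (1 - p) ^ (n - wt (orv x x')) * (p / 3) ^ wt (orv x x') *
        signChar (dot x z + dot x' z') = (1 - 4 * p / 3) ^ wt (orv z z') := by
  have hrhs := pow_sub_wt_orv_mul_pow_wt_orv (1 : ℝ) (1 - 4 * p / 3) z z'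
  rw [one_pow, one_mul] at hrhs
  rw [hrhs]
  simp only [pow_sub_wt_orv_mul_pow_wt_orv, dot, ← sum_add_distrib, AddChar.map_sum_eq_prod,
    ← prod_mul_distrib]
  exact (Fintype.sum_pi_sum_pi_prod fun i a b =>
      (if a = 0 ∧ b = 0 then 1 - p else p / 3) * signChar (a * z i + b * z' i)).trans
    (prod_congr rfl fun i _ => sum_sum_ite_mul_signChar p (z i) (z' i))

open scoped Classical in
theorem dual_code_coset_probability_depolarizing_general
    (n : ℕ) (C C' : Submodule (ZMod 2) (Fin n → ZMod 2))
    (e e' : Fin n → ZMod 2) (p : ℝ) :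
    ∑ y ∈ Finset.univ.filter (fun y : Fin n → ZMod 2 => ∀ z ∈ C, dot y z = 0),
      ∑ y' ∈ Finset.univ.filter (fun y' : Fin n → ZMod 2 => ∀ z' ∈ C', dot y' z' = 0),
        (1 - p) ^ (n - wt (orv (e + y) (e' + y'))) * (p / 3) ^ wt (orv (e + y) (e' + y'))
    = (1 / ((Nat.card C : ℝ) * (Nat.card C' : ℝ))) *
        ∑ z ∈ Finset.univ.filter (fun z : Fin n → ZMod 2 => z ∈ C),
          ∑ z' ∈ Finset.univ.filter (fun z' : Fin n → ZMod 2 => z' ∈ C'),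
            (if dot e z + dot e' z' = 0 then (1 : ℝ) else -1) *
              (1 - 4 * p / 3) ^ wt (orv z z') := by
  have hcard : (Nat.card C : ℝ) * Nat.card C' ≠ 0 := by simp
  rw [one_div, eq_inv_mul_iff_mul_eq₀ hcard]
  refine (poisson_summation_dual_prod C C' e e'
    fun x x' => (1 - p) ^ (n - wt (orv x x')) * (p / 3) ^ wt (orv x x')).trans ?_
  simp only [sum_sum_depolarizing_mul_signChar]
  rfl

open scoped Classical in
/-- **Dual-code coset probabilities on the depolarizing channel.**
For linear codes `C, C' ⊆ F₂ⁿ`, `e, e' ∈ F₂ⁿ` and `0 < p < 1`, the probability of the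
coset `(e,e') + C^⊥ × C'^⊥` under the channel where each coordinate pair is `(0,0)`
with probability `1−p` and each of `(0,1), (1,0), (1,1)` with probability `p/3`
equals `(1/(|C||C'|)) Σ_{z ∈ C} Σ_{z' ∈ C'} (−1)^{⟨e,z⟩+⟨e',z'⟩} (1−4p/3)^{wt(z ∨ z')}`. -/
theorem dual_code_coset_probability_depolarizing
    (n : ℕ) (C C' : Submodule (ZMod 2) (Fin n → ZMod 2))
    (e e' : Fin n → ZMod 2) (p : ℝ) (hp0 : 0 < p) (hp1 : p < 1) :
    ∑ y ∈ Finset.univ.filter (fun y : Fin n → ZMod 2 => ∀ z ∈ C, dot y z = 0),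
      ∑ y' ∈ Finset.univ.filter (fun y' : Fin n → ZMod 2 => ∀ z' ∈ C', dot y' z' = 0),
        (1 - p) ^ (n - wt (orv (e + y) (e' + y'))) * (p / 3) ^ wt (orv (e + y) (e' + y'))
    = (1 / ((Nat.card C : ℝ) * (Nat.card C' : ℝ))) *
        ∑ z ∈ Finset.univ.filter (fun z : Fin n → ZMod 2 => z ∈ C),
          ∑ z' ∈ Finset.univ.filter (fun z' : Fin n → ZMod 2 => z' ∈ C'),
            (if dot e z + dot e' z' = 0 then (1 : ℝ) else -1) *
              (1 - 4 * p / 3) ^ wt (orv z z') :=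
  dual_code_coset_probability_depolarizing_general n C C' e e' p
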